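/- Let X ∈ ℝ^{n×d}, y ∈ ℝⁿ, and let Ψ : ℝ^d → ℝ be convex and differentiable. Let β₀, β_∞ ∈ ℝ^d satisfy Xβ_∞ = y and ∇Ψ(β_∞) − ∇Ψ(β₀) ∈ range(Xᵀ). Then β_∞ minimizes the Bregman divergence D_Ψ(·, β₀) over the constraint set: for every β ∈ ℝ^d with Xβ = y, D_Ψ(β_∞, β₀) ≤ D_Ψ(β, β₀). -/

import Mathlib

/-!
Three-point identity: for any `b`,
`D(b, β₀) = D(b, β∞) + D(β∞, β₀) + ⟪∇Ψ β∞ - ∇Ψ β₀, b - β∞⟫`.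
If `X b = y = X β∞`, then `b - β∞ ∈ ker X`, which is orthogonal to `range Xᵀ`, so the last term
vanishes; and `D(b, β∞) ≥ 0` is the first-order characterisation of convexity.
-/

open scoped InnerProductSpace Matrix

theorem ConvexOn.add_fderiv_sub_le {E : Type*} [NormedAddCommGroup E] [NormedSpace ℝ E]
    {s : Set E} {f : E → ℝ} {f' : E →L[ℝ] ℝ} {x y : E} (hf : ConvexOn ℝ s f)
    (hx : x ∈ s) (hy : y ∈ s) (hf' : HasFDerivAt f f' x) :
    f x + f' (y - x) ≤ f y := by
  let L := AffineMap.lineMap (k := ℝ) x y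
  have hL : ConvexOn ℝ (L ⁻¹' s) (f ∘ L) := hf.comp_affineMap L
  have hderiv : HasDerivAt (f ∘ L) (f' (y - x)) 0 := by
    have hf'0 : HasFDerivAt f f' (L 0) := by simpa [L] using hf'
    exact hf'0.comp_hasDerivAt 0 AffineMap.hasDerivAt_lineMap
  have hslope := hL.le_slope_of_hasDerivAt (x := 0) (y := 1) (by simpa [L] using hx)
    (by simpa [L] using hy) zero_lt_one hderiv
  simp only [slope_def_field, Function.comp_apply, L, AffineMap.lineMap_apply_zero,
    AffineMap.lineMap_apply_one, sub_zero, div_one] at hslope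
  linarith

theorem ConvexOn.add_inner_sub_le_of_hasGradientAt {E : Type*} [NormedAddCommGroup E]
    [InnerProductSpace ℝ E] [CompleteSpace E] {s : Set E} {f : E → ℝ} {g x y : E}
    (hf : ConvexOn ℝ s f) (hx : x ∈ s) (hy : y ∈ s) (hg : HasGradientAt f g x) :
    f x + ⟪g, y - x⟫_ℝ ≤ f y := by
  simpa using hf.add_fderiv_sub_le hx hy (hasGradientAt_iff_hasFDerivAt.mp hg)

section Bregman

variable {E : Type*} [NormedAddCommGroup E] [InnerProductSpace ℝ E] [CompleteSpace E]

noncomputable def bregmanDiv (Ψ : E → ℝ) (β β₀ : E) : ℝ :=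
  Ψ β - Ψ β₀ - ⟪gradient Ψ β₀, β - β₀⟫_ℝ

theorem bregmanDiv_nonneg {Ψ : E → ℝ} {s : Set E} {β β₀ : E} (hΨ : ConvexOn ℝ s Ψ)
    (hβ : β ∈ s) (hβ₀ : β₀ ∈ s) (hdiff : DifferentiableAt ℝ Ψ β₀) :
    0 ≤ bregmanDiv Ψ β β₀ := by
  have := hΨ.add_inner_sub_le_of_hasGradientAt hβ₀ hβ hdiff.hasGradientAt
  unfold bregmanDiv
  linarith

theorem bregmanDiv_three_point (Ψ : E → ℝ) (β β₁ β₀ : E) :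
    bregmanDiv Ψ β β₀ = bregmanDiv Ψ β β₁ + bregmanDiv Ψ β₁ β₀ +
      ⟪gradient Ψ β₁ - gradient Ψ β₀, β - β₁⟫_ℝ := by
  have hsplit : β - β₀ = (β - β₁) + (β₁ - β₀) := by abel
  simp only [bregmanDiv, hsplit, inner_add_right, inner_sub_left]
  ring

end Bregman

theorem Matrix.inner_eq_zero_of_eq_transpose_mulVec {m n : Type*} [Fintype m] [Fintype n]
    (X : Matrix m n ℝ) (u : m → ℝ) {w v : EuclideanSpace ℝ n}
    (hw : ∀ j, w j = (Xᵀ *ᵥ u) j) (hv : X *ᵥ v = 0) : ⟪w, v⟫_ℝ = 0 := by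
  have hw' : WithLp.ofLp w = Xᵀ *ᵥ u := funext hw
  rw [EuclideanSpace.inner_eq_star_dotProduct, star_trivial, hw', mulVec_transpose,
    dotProduct_comm, ← dotProduct_mulVec, hv, dotProduct_zero]

theorem stmt_16 {n d : ℕ} (X : Matrix (Fin n) (Fin d) ℝ) (y : Fin n → ℝ)
    (Ψ : EuclideanSpace ℝ (Fin d) → ℝ)
    (hconv : ConvexOn ℝ Set.univ Ψ) (hdiff : Differentiable ℝ Ψ)
    (β₀ βinf : EuclideanSpace ℝ (Fin d)) (hfit : X.mulVec βinf = y)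
    (hrange : ∃ u : Fin n → ℝ,
      ∀ j, (gradient Ψ βinf - gradient Ψ β₀) j = X.transpose.mulVec u j) :
    ∀ b : EuclideanSpace ℝ (Fin d), X.mulVec b = y →
      Ψ βinf - Ψ β₀ - (inner ℝ (gradient Ψ β₀) (βinf - β₀) : ℝ) ≤
        Ψ b - Ψ β₀ - (inner ℝ (gradient Ψ β₀) (b - β₀) : ℝ) := by
  intro b hb
  obtain ⟨u, hu⟩ := hrange
  have horth : ⟪gradient Ψ βinf - gradient Ψ β₀, b - βinf⟫_ℝ = 0 :=
    X.inner_eq_zero_of_eq_transpose_mulVec u hu (by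
      rw [WithLp.ofLp_sub, Matrix.mulVec_sub, hb, hfit, sub_self])
  have hnonneg : 0 ≤ bregmanDiv Ψ b βinf :=
    bregmanDiv_nonneg hconv (Set.mem_univ _) (Set.mem_univ _) (hdiff βinf)
  change bregmanDiv Ψ βinf β₀ ≤ bregmanDiv Ψ b β₀
  rw [bregmanDiv_three_point Ψ b βinf β₀, horth]
  linarith
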